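/- arXiv:1211.2481 — 5 statements merged into one kernel-verified Lean document; each statement's English description precedes it below -/
import Mathlib

section
/- Under a completely randomized assignment, for any two distinct treatment combinations z ≠ z*, Cov(Ȳ^obs(z), Ȳ^obs(z*)) = −(1/N) S²(z,z*). -/
open Finset

noncomputable section

/-- A treatment combination in a 2^K factorial design: each of the K factors
is at its low level (`false`, coded −1) or high level (`true`, coded +1). -/
abbrev Combo (K : ℕ) := Fin K → Bool

/-- The completely randomized assignments: each of the 2^K treatment
combinations receives exactly `r` of the `N` units. -/
def Assignments (K N r : ℕ) : Finset (Fin N → Combo K) :=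
  Finset.univ.filter (fun ω => ∀ z : Combo K, (Finset.univ.filter (fun i => ω i = z)).card = r)

/-- Expectation over the uniform distribution on completely randomized assignments. -/
def expect (K N r : ℕ) (f : (Fin N → Combo K) → ℝ) : ℝ :=
  (∑ ω ∈ Assignments K N r, f ω) / ((Assignments K N r).card : ℝ)

/-- Variance over the uniform distribution on completely randomized assignments. -/
def variance (K N r : ℕ) (f : (Fin N → Combo K) → ℝ) : ℝ :=
  expect K N r (fun ω => (f ω - expect K N r f) ^ 2)

/-- Covariance over the uniform distribution on completely randomized assignments. -/
def covariance (K N r : ℕ) (f g : (Fin N → Combo K) → ℝ) : ℝ :=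
  expect K N r (fun ω => (f ω - expect K N r f) * (g ω - expect K N r g))

/-- The assignment indicator W_i(z). -/
def Wvar (K N : ℕ) (ω : Fin N → Combo K) (i : Fin N) (z : Combo K) : ℝ :=
  if ω i = z then 1 else 0

/-- The population mean Ȳ(z) of the potential outcomes under z. -/
def Ybar (K N : ℕ) (Y : Fin N → Combo K → ℝ) (z : Combo K) : ℝ :=
  (∑ i, Y i z) / (N : ℝ)

/-- The observed treatment mean Ȳ^obs(z) = (1/r) Σ_{i : W_i(z)=1} Y_i(z). -/
def YbarObs (K N r : ℕ) (Y : Fin N → Combo K → ℝ)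
    (ω : Fin N → Combo K) (z : Combo K) : ℝ :=
  (∑ i, if ω i = z then Y i z else 0) / (r : ℝ)

/-- Finite-population variance S²(z) (divisor N−1). -/
def Ssq (K N : ℕ) (Y : Fin N → Combo K → ℝ) (z : Combo K) : ℝ :=
  (∑ i, (Y i z - Ybar K N Y z) ^ 2) / ((N : ℝ) - 1)

/-- Finite-population covariance S²(z, z*) (divisor N−1). -/
def Scov (K N : ℕ) (Y : Fin N → Combo K → ℝ) (z zs : Combo K) : ℝ :=
  (∑ i, (Y i z - Ybar K N Y z) * (Y i zs - Ybar K N Y zs)) / ((N : ℝ) - 1)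

/-- The contrast g_A(z) = Π_{k ∈ A} z_k ∈ {−1, +1}. -/
def gA (K : ℕ) (A : Finset (Fin K)) (z : Combo K) : ℝ :=
  ∏ k ∈ A, (if z k then (1 : ℝ) else -1)

/-- The unit-level factorial effect τ_{iA} = 2^{−(K−1)} Σ_z g_A(z) Y_i(z). -/
def tauUnit (K N : ℕ) (Y : Fin N → Combo K → ℝ) (A : Finset (Fin K)) (i : Fin N) : ℝ :=
  (∑ z : Combo K, gA K A z * Y i z) / (2 : ℝ) ^ (K - 1)

/-- The population-level factorial effect τ̄_A = (1/N) Σ_i τ_{iA}. -/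
def tauBar (K N : ℕ) (Y : Fin N → Combo K → ℝ) (A : Finset (Fin K)) : ℝ :=
  (∑ i, tauUnit K N Y A i) / (N : ℝ)

/-- The estimated factorial effect τ̂_A = 2^{−(K−1)} Σ_z g_A(z) Ȳ^obs(z). -/
def tauHat (K N r : ℕ) (Y : Fin N → Combo K → ℝ) (A : Finset (Fin K))
    (ω : Fin N → Combo K) : ℝ :=
  (∑ z : Combo K, gA K A z * YbarObs K N r Y ω z) / (2 : ℝ) ^ (K - 1)

/-- The finite-population variance S_A² of the unit-level factorial effects. -/
def SsqA (K N : ℕ) (Y : Fin N → Combo K → ℝ) (A : Finset (Fin K)) : ℝ :=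
  (∑ i, (tauUnit K N Y A i - tauBar K N Y A) ^ 2) / ((N : ℝ) - 1)

/-- Strict additivity: unit-level differences of potential outcomes between any
two treatment combinations are constant across units. -/
def StrictAdditivity (K N : ℕ) (Y : Fin N → Combo K → ℝ) : Prop :=
  ∀ z zs : Combo K, ∀ i i' : Fin N, Y i z - Y i zs = Y i' z - Y i' zs

/-- Compound symmetry: common variance S² > 0 and common correlation ρ,
i.e. S²(z) = S² for all z and S²(z,z*) = ρ S² for all z ≠ z*. -/
def CompoundSymmetry (K N : ℕ) (Y : Fin N → Combo K → ℝ) (S2 ρ : ℝ) : Prop :=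
  0 < S2 ∧ (∀ z : Combo K, Ssq K N Y z = S2) ∧
    ∀ z zs : Combo K, z ≠ zs → Scov K N Y z zs = ρ * S2

/-!
The set of completely randomized assignments is invariant under permutations of the units.
Hence `E W_i(z)` does not depend on `i`, and `E[W_i(z) W_j(z*)]` does not depend on the pair
`i ≠ j`; since every assignment gives exactly `r` units to each combination, summing over the
units identifies them as `r / N` and `r² / (N (N - 1))`, while the diagonal `i = j` vanishes
because `z ≠ z*`. Thus `E Ȳ^obs(z) = Ȳ(z)` and
`E[Ȳ^obs(z) Ȳ^obs(z*)] = (Σ_i Y_i(z) Σ_j Y_j(z*) - Σ_i Y_i(z) Y_i(z*)) / (N (N - 1))`,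
and the covariance formula is algebra.
-/

open scoped BigOperators

lemma Equiv.Perm.exists_apply_eq_and_apply_eq {α : Type*} [DecidableEq α] {i j i' j' : α}
    (h : i ≠ j) (h' : i' ≠ j') : ∃ σ : Equiv.Perm α, σ i' = i ∧ σ j' = j := by
  set τ := Equiv.swap i' i
  have hτ : τ i' = i := Equiv.swap_apply_left _ _
  have hne : i ≠ τ j' := fun he => h' (τ.injective (hτ.trans he))
  refine ⟨τ.trans (Equiv.swap (τ j') j), ?_, Equiv.swap_apply_left _ _⟩
  simp only [Equiv.trans_apply, hτ]
  exact Equiv.swap_apply_of_ne_of_ne hne h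

namespace Finset

variable {ι α M 𝕜 : Type*}

lemma expect_sub_expect_mul_sub_expect [Field 𝕜] [CharZero 𝕜] {s : Finset ι}
    (hs : s.Nonempty) (f g : ι → 𝕜) :
    𝔼 i ∈ s, (f i - 𝔼 j ∈ s, f j) * (g i - 𝔼 j ∈ s, g j) =
      𝔼 i ∈ s, f i * g i - (𝔼 i ∈ s, f i) * 𝔼 i ∈ s, g i := by
  simp_rw [sub_mul, mul_sub, expect_sub_distrib, ← expect_mul, ← mul_expect, expect_const hs]
  ring

lemma sum_sum_ite_eq_sub_sum_diag [Fintype ι] [DecidableEq ι] [AddCommGroup M] (f : ι → ι → M) :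
    ∑ i, ∑ j, (if i = j then 0 else f i j) = ∑ i, ∑ j, f i j - ∑ i, f i i := by
  rw [← sum_sub_distrib]
  refine sum_congr rfl fun i _ => ?_
  rw [sum_ite, sum_const_zero, zero_add, filter_ne, sum_erase_eq_sub (mem_univ i)]

variable [AddCommMonoid M] [Module ℚ≥0 M] {s : Finset (ι → α)}

lemma expect_comp_perm (hs : ∀ σ : Equiv.Perm ι, ∀ ω ∈ s, ω ∘ σ ∈ s) (σ : Equiv.Perm ι)
    (f : (ι → α) → M) : 𝔼 ω ∈ s, f (ω ∘ σ) = 𝔼 ω ∈ s, f ω :=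
  expect_nbij' (· ∘ σ) (· ∘ σ.symm) (hs σ) (hs σ.symm)
    (fun _ _ => by simp [Function.comp_assoc]) (fun _ _ => by simp [Function.comp_assoc])
    (fun _ _ => rfl)

lemma expect_apply_eq [DecidableEq ι] (hs : ∀ σ : Equiv.Perm ι, ∀ ω ∈ s, ω ∘ σ ∈ s)
    (g : α → M) (i i' : ι) : 𝔼 ω ∈ s, g (ω i) = 𝔼 ω ∈ s, g (ω i') := by
  simpa using expect_comp_perm hs (Equiv.swap i i') fun ω => g (ω i')

lemma expect_apply_apply_eq [DecidableEq ι] (hs : ∀ σ : Equiv.Perm ι, ∀ ω ∈ s, ω ∘ σ ∈ s)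
    (g : α → α → M) {i j i' j' : ι} (h : i ≠ j) (h' : i' ≠ j') :
    𝔼 ω ∈ s, g (ω i) (ω j) = 𝔼 ω ∈ s, g (ω i') (ω j') := by
  obtain ⟨σ, hi, hj⟩ := Equiv.Perm.exists_apply_eq_and_apply_eq h h'
  simpa [hi, hj] using expect_comp_perm hs σ fun ω => g (ω i') (ω j')

end Finset

namespace CompletelyRandomized

variable {K N r : ℕ}

lemma expect_eq_finsetExpect (f : (Fin N → Combo K) → ℝ) :
    expect K N r f = 𝔼 ω ∈ Assignments K N r, f ω :=
  (expect_eq_sum_div_card _ _).symm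

lemma covariance_eq_expect_mul_sub (hA : (Assignments K N r).Nonempty)
    (f g : (Fin N → Combo K) → ℝ) :
    covariance K N r f g =
      𝔼 ω ∈ Assignments K N r, f ω * g ω -
        (𝔼 ω ∈ Assignments K N r, f ω) * 𝔼 ω ∈ Assignments K N r, g ω := by
  simp only [covariance, expect_eq_finsetExpect]
  exact expect_sub_expect_mul_sub_expect hA f g

lemma mem_assignments {ω : Fin N → Combo K} :
    ω ∈ Assignments K N r ↔ ∀ z, #{i | ω i = z} = r := by
  simp [Assignments]

lemma comp_perm_mem_assignments (σ : Equiv.Perm (Fin N)) (ω : Fin N → Combo K)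
    (hω : ω ∈ Assignments K N r) : ω ∘ σ ∈ Assignments K N r := by
  rw [mem_assignments] at hω ⊢
  intro z
  rw [← hω z]
  exact card_equiv σ (by simp)

lemma assignments_nonempty (hN : N = r * 2 ^ K) : (Assignments K N r).Nonempty := by
  obtain e : Fin N ≃ Fin r × Combo K := Fintype.equivOfCardEq (by simp [hN])
  refine ⟨fun i => (e i).2, mem_assignments.mpr fun z => ?_⟩
  have hfiber : ({p | p.2 = z} : Finset (Fin r × Combo K)) = univ ×ˢ {z} := by
    ext ⟨_, _⟩
    simp [eq_comm]
  rw [card_equiv e (t := {p | p.2 = z}) (by simp), hfiber]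
  simp

lemma sum_Wvar {ω : Fin N → Combo K} (hω : ω ∈ Assignments K N r) (z : Combo K) :
    ∑ i, Wvar K N ω i z = r := by
  simp [Wvar, mem_assignments.mp hω z]

lemma Wvar_mul_Wvar_self {z zs : Combo K} (hz : z ≠ zs) (ω : Fin N → Combo K) (i : Fin N) :
    Wvar K N ω i z * Wvar K N ω i zs = 0 := by
  unfold Wvar
  split_ifs <;> simp_all

lemma expect_Wvar (hA : (Assignments K N r).Nonempty) (i : Fin N) (z : Combo K) :
    𝔼 ω ∈ Assignments K N r, Wvar K N ω i z = r / N := by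
  have hN : (N : ℝ) ≠ 0 := by exact_mod_cast i.pos.ne'
  rw [eq_div_iff hN]
  calc (𝔼 ω ∈ Assignments K N r, Wvar K N ω i z) * N
      = ∑ _i' : Fin N, 𝔼 ω ∈ Assignments K N r, Wvar K N ω i z := by simp [mul_comm]
    _ = ∑ i' : Fin N, 𝔼 ω ∈ Assignments K N r, Wvar K N ω i' z :=
        sum_congr rfl fun i' _ => expect_apply_eq comp_perm_mem_assignments
          (fun a => if a = z then 1 else 0) i i'
    _ = 𝔼 ω ∈ Assignments K N r, ∑ i', Wvar K N ω i' z := (expect_sum_comm ..).symm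
    _ = 𝔼 _ω ∈ Assignments K N r, (r : ℝ) := expect_congr rfl fun ω hω => sum_Wvar hω z
    _ = r := expect_const hA _

lemma expect_Wvar_mul_Wvar (hA : (Assignments K N r).Nonempty) {z zs : Combo K} (hz : z ≠ zs)
    (i j : Fin N) :
    𝔼 ω ∈ Assignments K N r, Wvar K N ω i z * Wvar K N ω j zs =
      if i = j then 0 else (r : ℝ) ^ 2 / (N * (N - 1)) := by
  have hdiag : ∀ i', 𝔼 ω ∈ Assignments K N r, Wvar K N ω i' z * Wvar K N ω i' zs = 0 :=
    fun i' => expect_eq_zero fun ω _ => Wvar_mul_Wvar_self hz ω i'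
  split_ifs with hij
  · exact hij ▸ hdiag i
  set c := 𝔼 ω ∈ Assignments K N r, Wvar K N ω i z * Wvar K N ω j zs
  have hoff : ∀ i' j', 𝔼 ω ∈ Assignments K N r, Wvar K N ω i' z * Wvar K N ω j' zs =
      if i' = j' then 0 else c := by
    intro i' j'
    split_ifs with h
    · exact h ▸ hdiag i'
    · exact expect_apply_apply_eq comp_perm_mem_assignments
        (fun a b => (if a = z then 1 else 0) * if b = zs then 1 else 0) h hij
  have hN : (2 : ℝ) ≤ N := by
    have : Nontrivial (Fin N) := ⟨⟨i, j, hij⟩⟩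
    exact_mod_cast Fin.nontrivial_iff_two_le.mp this
  rw [eq_div_iff (by nlinarith)]
  calc c * (N * (N - 1))
      = ∑ i' : Fin N, ∑ j' : Fin N, if i' = j' then 0 else c := by
        rw [sum_sum_ite_eq_sub_sum_diag]
        simp only [sum_const, card_univ, Fintype.card_fin, nsmul_eq_mul]
        ring
    _ = ∑ i', ∑ j', 𝔼 ω ∈ Assignments K N r, Wvar K N ω i' z * Wvar K N ω j' zs := by
        simp only [hoff]
    _ = 𝔼 ω ∈ Assignments K N r, (∑ i', Wvar K N ω i' z) * ∑ j', Wvar K N ω j' zs := by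
        simp_rw [sum_mul_sum, expect_sum_comm]
    _ = 𝔼 _ω ∈ Assignments K N r, (r : ℝ) ^ 2 :=
        expect_congr rfl fun ω hω => by rw [sum_Wvar hω, sum_Wvar hω, sq]
    _ = r ^ 2 := expect_const hA _

lemma YbarObs_eq_sum_Wvar_mul (Y : Fin N → Combo K → ℝ) (ω : Fin N → Combo K) (z : Combo K) :
    YbarObs K N r Y ω z = (∑ i, Wvar K N ω i z * Y i z) / r := by
  simp [YbarObs, Wvar]

lemma expect_YbarObs (hA : (Assignments K N r).Nonempty) (hr : r ≠ 0)
    (Y : Fin N → Combo K → ℝ) (z : Combo K) :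
    𝔼 ω ∈ Assignments K N r, YbarObs K N r Y ω z = Ybar K N Y z := by
  simp_rw [YbarObs_eq_sum_Wvar_mul, ← expect_div, expect_sum_comm,
    ← expect_mul, expect_Wvar hA, Ybar, sum_div]
  refine sum_congr rfl fun i _ => ?_
  field_simp

lemma expect_YbarObs_mul_YbarObs (hA : (Assignments K N r).Nonempty) (hr : r ≠ 0)
    (Y : Fin N → Combo K → ℝ) {z zs : Combo K} (hz : z ≠ zs) :
    𝔼 ω ∈ Assignments K N r, YbarObs K N r Y ω z * YbarObs K N r Y ω zs =
      ((∑ i, Y i z) * (∑ i, Y i zs) - ∑ i, Y i z * Y i zs) / (N * (N - 1)) := by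
  calc 𝔼 ω ∈ Assignments K N r, YbarObs K N r Y ω z * YbarObs K N r Y ω zs
      = (∑ i, ∑ j, (𝔼 ω ∈ Assignments K N r, Wvar K N ω i z * Wvar K N ω j zs) *
          (Y i z * Y j zs)) / r ^ 2 := by
        simp_rw [YbarObs_eq_sum_Wvar_mul, div_mul_div_comm, sum_mul_sum, ← sq,
          ← expect_div, expect_sum_comm, expect_mul, mul_mul_mul_comm]
    _ = (∑ i, ∑ j, if i = j then 0 else (r : ℝ) ^ 2 / (N * (N - 1)) * (Y i z * Y j zs)) /
          r ^ 2 := by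
        simp_rw [expect_Wvar_mul_Wvar hA hz, ite_mul, zero_mul]
    _ = _ := by
        rw [sum_sum_ite_eq_sub_sum_diag, sum_mul_sum]
        simp_rw [← mul_sum, ← mul_sub]
        rw [div_mul_eq_mul_div, div_right_comm, mul_div_cancel_left₀ _ (by positivity)]

lemma Scov_eq_sum_mul_sub (hN : (N : ℝ) ≠ 0) (Y : Fin N → Combo K → ℝ) (z zs : Combo K) :
    Scov K N Y z zs = (∑ i, Y i z * Y i zs - (∑ i, Y i z) * (∑ i, Y i zs) / N) / (N - 1) := by
  simp_rw [Scov, Ybar, sub_mul, mul_sub, sum_sub_distrib, ← sum_mul,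
    ← mul_sum, sum_const, card_univ, Fintype.card_fin, nsmul_eq_mul]
  field_simp
  ring

end CompletelyRandomized

open CompletelyRandomized

/-- For z ≠ z*, Cov(Ȳ^obs(z), Ȳ^obs(z*)) = −(1/N) S²(z,z*). -/
theorem ybarobs_covariance (K N r : ℕ) (hK : 1 ≤ K) (hr : 0 < r) (hN : N = r * 2 ^ K)
    (Y : Fin N → Combo K → ℝ) (z zs : Combo K) (hz : z ≠ zs) :
    covariance K N r (fun ω => YbarObs K N r Y ω z) (fun ω => YbarObs K N r Y ω zs) =
      -(1 / (N : ℝ)) * Scov K N Y z zs := by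
  have hA := assignments_nonempty hN
  have hN2 : (2 : ℝ) ≤ N := by
    have : 2 ≤ 2 ^ K := Nat.le_self_pow (by omega) 2
    exact_mod_cast hN ▸ this.trans (Nat.le_mul_of_pos_left _ hr)
  rw [covariance_eq_expect_mul_sub hA, expect_YbarObs_mul_YbarObs hA hr.ne' Y hz,
    expect_YbarObs hA hr.ne', expect_YbarObs hA hr.ne', Scov_eq_sum_mul_sub (by positivity),
    Ybar, Ybar]
  have : (N : ℝ) - 1 ≠ 0 := by linarith
  field_simp
  ring
end
end

section
/- Strict additivity holds if and only if S_A² = 0 for every nonempty subset A ⊆ {1,…,K}; equivalently, strict additivity holds if and only if, for every nonempty A, the unit-level factorial effects τ_{iA} are the same for all units i. -/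
/-!
The contrasts are orthogonal: `∑_A g_A(z) g_A(w) = 2^K δ_{zw}`. Hence a function `d` of the
treatment combination is recovered from its factorial effects, and it is constant exactly when
its effects for all nonempty `A` vanish. Strict additivity says that every unit difference
`d = Y_i - Y_{i'}` is constant, and `τ_{iA} - τ_{i'A}` is the `A`-effect of that `d`. Finally,
since `N ≥ 2`, `S_A² = 0` says that `τ_{iA}` does not depend on `i`.
-/

open Finset

noncomputable section

def boolSign (b : Bool) : ℝ := if b then 1 else -1

lemma sum_boolSign : ∑ b : Bool, boolSign b = 0 := by
  simp [boolSign]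

lemma one_add_boolSign_mul_boolSign (a b : Bool) :
    1 + boolSign a * boolSign b = if a = b then 2 else 0 := by
  cases a <;> cases b <;> norm_num [boolSign]

lemma gA_eq_prod_boolSign (K : ℕ) (A : Finset (Fin K)) (z : Combo K) :
    gA K A z = ∏ k ∈ A, boolSign (z k) :=
  rfl

lemma sum_gA_eq_zero {K : ℕ} {A : Finset (Fin K)} (hA : A.Nonempty) :
    ∑ z : Combo K, gA K A z = 0 := by
  obtain ⟨k, hk⟩ := hA
  calc ∑ z : Combo K, gA K A z
      = ∑ z : Combo K, ∏ j, if j ∈ A then boolSign (z j) else 1 := by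
        simp only [gA_eq_prod_boolSign, prod_ite_mem, univ_inter]
    _ = ∏ j, ∑ b : Bool, if j ∈ A then boolSign b else 1 := by rw [Fintype.prod_sum]
    _ = 0 := prod_eq_zero (mem_univ k) (by simp only [hk, if_true, sum_boolSign])

lemma sum_gA_mul_gA (K : ℕ) (z w : Combo K) :
    ∑ A : Finset (Fin K), gA K A z * gA K A w = if z = w then 2 ^ K else 0 := by
  calc ∑ A : Finset (Fin K), gA K A z * gA K A w
      = ∑ A ∈ univ.powerset, ∏ k ∈ A, boolSign (z k) * boolSign (w k) := by
        simp only [powerset_univ, gA_eq_prod_boolSign, prod_mul_distrib]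
    _ = ∏ k, (1 + boolSign (z k) * boolSign (w k)) := (prod_one_add _).symm
    _ = ∏ k, if z k = w k then (2 : ℝ) else 0 := by
        simp only [one_add_boolSign_mul_boolSign]
    _ = if z = w then 2 ^ K else 0 := by
        split_ifs with hzw
        · simp [hzw]
        · obtain ⟨k, hk⟩ := Function.ne_iff.mp hzw
          exact prod_eq_zero (mem_univ k) (if_neg hk)

lemma sum_gA_mul_sum_gA_mul (K : ℕ) (d : Combo K → ℝ) (z : Combo K) :
    ∑ A : Finset (Fin K), gA K A z * ∑ w, gA K A w * d w = 2 ^ K * d z := by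
  calc ∑ A : Finset (Fin K), gA K A z * ∑ w, gA K A w * d w
      = ∑ w, (∑ A : Finset (Fin K), gA K A z * gA K A w) * d w := by
        simp only [mul_sum, sum_mul, mul_assoc]
        exact sum_comm
    _ = 2 ^ K * d z := by
        simp only [sum_gA_mul_gA, ite_mul, zero_mul, sum_ite_eq, mem_univ, if_true]

lemma contrasts_eq_zero_iff_const {K : ℕ} (d : Combo K → ℝ) :
    (∀ A : Finset (Fin K), A.Nonempty → ∑ z, gA K A z * d z = 0) ↔ ∀ z w, d z = d w := by
  constructor
  · intro h
    have hconst : ∀ z, 2 ^ K * d z = ∑ w, d w := fun z => by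
      rw [← sum_gA_mul_sum_gA_mul, sum_eq_single ∅]
      · simp [gA]
      · intro A _ hA
        rw [h A (nonempty_iff_ne_empty.mpr hA), mul_zero]
      · simp
    intro z w
    exact mul_left_cancel₀ (by positivity) ((hconst z).trans (hconst w).symm)
  · intro h A hA
    calc ∑ z, gA K A z * d z = ∑ z, gA K A z * d (fun _ => true) :=
          sum_congr rfl fun z _ => by rw [h z]
      _ = 0 := by rw [← sum_mul, sum_gA_eq_zero hA, zero_mul]

lemma tauUnit_eq_tauUnit_iff (K N : ℕ) (Y : Fin N → Combo K → ℝ) (A : Finset (Fin K))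
    (i i' : Fin N) :
    tauUnit K N Y A i = tauUnit K N Y A i' ↔ ∑ z, gA K A z * (Y i z - Y i' z) = 0 := by
  rw [tauUnit, tauUnit, div_left_inj' (pow_ne_zero _ two_ne_zero), ← sub_eq_zero,
    ← sum_sub_distrib]
  simp only [mul_sub]

lemma sum_sq_sub_mean_eq_zero_iff {ι : Type*} [Fintype ι] (f : ι → ℝ) :
    ∑ i, (f i - (∑ j, f j) / Fintype.card ι) ^ 2 = 0 ↔ ∀ i j, f i = f j := by
  constructor
  · intro h
    have hmean : ∀ i, f i = (∑ j, f j) / Fintype.card ι := fun i => by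
      have hi := (sum_eq_zero_iff_of_nonneg fun i _ => sq_nonneg _).mp h i (mem_univ i)
      exact sub_eq_zero.mp (pow_eq_zero_iff two_ne_zero |>.mp hi)
    intro i j
    rw [hmean i, hmean j]
  · intro h
    refine sum_eq_zero fun i _ => ?_
    have : Nonempty ι := ⟨i⟩
    have hmean : (∑ j, f j) / Fintype.card ι = f i := by
      rw [sum_congr rfl fun j _ => h j i, sum_const, card_univ, nsmul_eq_mul,
        mul_div_cancel_left₀ _ (Nat.cast_ne_zero.mpr Fintype.card_ne_zero)]
    rw [hmean, sub_self, zero_pow two_ne_zero]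

lemma SsqA_eq_zero_iff {K N : ℕ} (hN : 1 < N) (Y : Fin N → Combo K → ℝ) (A : Finset (Fin K)) :
    SsqA K N Y A = 0 ↔ ∀ i i', tauUnit K N Y A i = tauUnit K N Y A i' := by
  have hN' : (N : ℝ) - 1 ≠ 0 := sub_ne_zero.mpr (by exact_mod_cast hN.ne')
  rw [SsqA, tauBar, div_eq_zero_iff, or_iff_left hN']
  simpa only [Fintype.card_fin] using sum_sq_sub_mean_eq_zero_iff (tauUnit K N Y A)

lemma strictAdditivity_iff_forall_tauUnit_eq (K N : ℕ) (Y : Fin N → Combo K → ℝ) :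
    StrictAdditivity K N Y ↔
      ∀ A : Finset (Fin K), A.Nonempty → ∀ i i', tauUnit K N Y A i = tauUnit K N Y A i' := by
  constructor
  · intro h A hA i i'
    rw [tauUnit_eq_tauUnit_iff]
    exact (contrasts_eq_zero_iff_const _).mpr
      (fun z w => sub_eq_sub_iff_sub_eq_sub.mp (h z w i i')) A hA
  · intro h z w i i'
    refine sub_eq_sub_iff_sub_eq_sub.mpr
      ((contrasts_eq_zero_iff_const (fun z => Y i z - Y i' z)).mp ?_ z w)
    exact fun A hA => (tauUnit_eq_tauUnit_iff K N Y A i i').mp (h A hA i i')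

theorem strict_additivity_iff_general (K N : ℕ)
    (hN2 : 2 ≤ N) (Y : Fin N → Combo K → ℝ) :
    (StrictAdditivity K N Y ↔
      ∀ A : Finset (Fin K), A.Nonempty → SsqA K N Y A = 0) ∧
    (StrictAdditivity K N Y ↔
      ∀ A : Finset (Fin K), A.Nonempty →
        ∀ i i' : Fin N, tauUnit K N Y A i = tauUnit K N Y A i') := by
  have hTau := strictAdditivity_iff_forall_tauUnit_eq K N Y
  exact ⟨hTau.trans (forall₂_congr fun A _ => (SsqA_eq_zero_iff hN2 Y A).symm), hTau⟩

/-- Strict additivity holds iff S_A² = 0 for every nonempty A;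
equivalently, iff for every nonempty A the unit-level effects τ_{iA} are
constant across units. -/
theorem strict_additivity_iff (K N r : ℕ) (hK : 1 ≤ K) (hr : 0 < r) (hN : N = r * 2 ^ K)
    (hN2 : 2 ≤ N) (Y : Fin N → Combo K → ℝ) :
    (StrictAdditivity K N Y ↔
      ∀ A : Finset (Fin K), A.Nonempty → SsqA K N Y A = 0) ∧
    (StrictAdditivity K N Y ↔
      ∀ A : Finset (Fin K), A.Nonempty →
        ∀ i i' : Fin N, tauUnit K N Y A i = tauUnit K N Y A i') :=
  strict_additivity_iff_general K N hN2 Y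
end
end

section
/- Under compound symmetry with common variance S² and common correlation ρ, for every nonempty subset A ⊆ {1,…,K} the population variance of the unit-level factorial effects equals S_A² = (1/2^{K−2}) (1−ρ) S². -/
open Finset

noncomputable section

/-!
Since `τ_{iA} − τ̄_A = 2^{−(K−1)} Σ_z g_A(z) (Y_i(z) − Ȳ(z))`, the variance `S_A²` is the
quadratic form of the covariance matrix `S²(z, z*)` at the contrast vector `g_A`, divided by
`4^{K−1}`. Under compound symmetry that matrix is `ρS² J + (1 − ρ)S² I`. The `J` part
vanishes because a contrast with `A ≠ ∅` is balanced (`Σ_z g_A(z) = 0`), and the `I` part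
contributes `(1 − ρ)S² Σ_z g_A(z)² = (1 − ρ)S² 2^K`.
-/

lemma sum_sq_sum_mul_eq_sum_sum {ι κ : Type*} [Fintype ι] [Fintype κ]
    (w : κ → ℝ) (d : ι → κ → ℝ) :
    ∑ i, (∑ z, w z * d i z) ^ 2 = ∑ z, ∑ zs, w z * w zs * ∑ i, d i z * d i zs := by
  simp_rw [sq, sum_mul_sum, mul_sum]
  conv_lhs => rw [sum_comm]; enter [2, z]; rw [sum_comm]
  exact sum_congr rfl fun z _ => sum_congr rfl fun zs _ => sum_congr rfl fun i _ => by ring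

lemma sum_sum_mul_compoundSymmetric {κ : Type*} [Fintype κ] [DecidableEq κ]
    (w : κ → ℝ) (a b : ℝ) :
    ∑ z, ∑ zs, w z * w zs * (a + if z = zs then b else 0)
      = a * (∑ z, w z) ^ 2 + b * ∑ z, w z * w z := by
  simp only [mul_add, sum_add_distrib, mul_ite, mul_zero, sum_ite_eq, mem_univ, if_true,
    ← sum_mul, ← mul_sum]
  ring

lemma gA_mul_self (K : ℕ) (A : Finset (Fin K)) (z : Combo K) : gA K A z * gA K A z = 1 := by
  rw [gA, ← prod_mul_distrib]
  exact prod_eq_one fun k _ => by cases z k <;> norm_num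

lemma sum_gA_mul_self (K : ℕ) (A : Finset (Fin K)) :
    ∑ z : Combo K, gA K A z * gA K A z = 2 ^ K := by
  simp [gA_mul_self]

lemma Scov_self (K N : ℕ) (Y : Fin N → Combo K → ℝ) (z : Combo K) :
    Scov K N Y z z = Ssq K N Y z := by
  simp only [Scov, Ssq, sq]

lemma CompoundSymmetry.Scov_eq {K N : ℕ} {Y : Fin N → Combo K → ℝ} {S2 ρ : ℝ}
    (hcs : CompoundSymmetry K N Y S2 ρ) (z zs : Combo K) :
    Scov K N Y z zs = ρ * S2 + if z = zs then (1 - ρ) * S2 else 0 := by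
  obtain ⟨-, hvar, hcov⟩ := hcs
  split_ifs with h
  · rw [h, Scov_self, hvar]
    ring
  · rw [hcov z zs h, add_zero]

lemma sum_sum_mul_Scov (K N : ℕ) (Y : Fin N → Combo K → ℝ) (w : Combo K → ℝ) :
    ∑ z, ∑ zs, w z * w zs * Scov K N Y z zs
      = (∑ i, (∑ z, w z * (Y i z - Ybar K N Y z)) ^ 2) / ((N : ℝ) - 1) := by
  simp only [Scov, mul_div_assoc', ← sum_div, sum_sq_sum_mul_eq_sum_sum]

lemma tauUnit_sub_tauBar (K N : ℕ) (Y : Fin N → Combo K → ℝ) (A : Finset (Fin K)) (i : Fin N) :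
    tauUnit K N Y A i - tauBar K N Y A
      = (∑ z, gA K A z * (Y i z - Ybar K N Y z)) / 2 ^ (K - 1) := by
  have hbar : tauBar K N Y A = (∑ z, gA K A z * Ybar K N Y z) / 2 ^ (K - 1) := by
    simp only [tauBar, tauUnit, Ybar, ← sum_div, mul_sum, div_div, mul_div_assoc']
    rw [sum_comm, mul_comm ((N : ℝ))]
  rw [hbar, tauUnit, ← sub_div, ← sum_sub_distrib]
  simp only [mul_sub]

lemma SsqA_eq_sum_sum_Scov (K N : ℕ) (Y : Fin N → Combo K → ℝ) (A : Finset (Fin K)) :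
    SsqA K N Y A
      = (∑ z, ∑ zs, gA K A z * gA K A zs * Scov K N Y z zs) / ((2 : ℝ) ^ (K - 1)) ^ 2 := by
  simp only [sum_sum_mul_Scov, SsqA, tauUnit_sub_tauBar, div_pow, ← sum_div]
  ring

lemma two_pow_div_two_pow_pred_sq {K : ℕ} (hK : 1 ≤ K) :
    (2 : ℝ) ^ K / ((2 : ℝ) ^ (K - 1)) ^ 2 = 1 / (2 : ℝ) ^ ((K : ℤ) - 2) := by
  rw [← pow_mul, ← zpow_natCast, ← zpow_natCast, ← zpow_sub₀ two_ne_zero, one_div,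
    ← zpow_neg]
  congr 1
  push_cast [Nat.cast_sub hK]
  ring

theorem SsqA_compound_symmetry_general (K N : ℕ) (hK : 1 ≤ K)
    (Y : Fin N → Combo K → ℝ) (S2 ρ : ℝ)
    (hcs : CompoundSymmetry K N Y S2 ρ)
    (A : Finset (Fin K)) (hA : A.Nonempty) :
    SsqA K N Y A = (1 / (2 : ℝ) ^ ((K : ℤ) - 2)) * (1 - ρ) * S2 := by
  rw [SsqA_eq_sum_sum_Scov]
  simp_rw [hcs.Scov_eq]
  rw [sum_sum_mul_compoundSymmetric, sum_gA_eq_zero hA, sum_gA_mul_self,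
    ← two_pow_div_two_pow_pred_sq hK]
  ring

/-- Under compound symmetry, S_A² = (1/2^{K−2}) (1−ρ) S². -/
theorem SsqA_compound_symmetry (K N r : ℕ) (hK : 1 ≤ K) (hr : 0 < r)
    (hN : N = r * 2 ^ K) (hN2 : 2 ≤ N) (Y : Fin N → Combo K → ℝ) (S2 ρ : ℝ)
    (hcs : CompoundSymmetry K N Y S2 ρ)
    (A : Finset (Fin K)) (hA : A.Nonempty) :
    SsqA K N Y A = (1 / (2 : ℝ) ^ ((K : ℤ) - 2)) * (1 - ρ) * S2 :=
  SsqA_compound_symmetry_general K N hK Y S2 ρ hcs A hA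
end
end

section
/- For a completely randomized assignment and any two distinct nonempty subsets A ≠ B of {1,…,K}, the sampling covariance of the estimated factorial effects is Cov(τ̂_A, τ̂_B) = (1/(2^{2(K−1)} r)) [ Σ_{z ∈ Z_A^− ∩ Z_B^−} S²(z) − Σ_{z ∈ Z_A^− ∩ Z_B^+} S²(z) − Σ_{z ∈ Z_A^+ ∩ Z_B^−} S²(z) + Σ_{z ∈ Z_A^+ ∩ Z_B^+} S²(z) ] − (1/N) S_{AB}², where S_{AB}² = (1/(N−1)) Σ_{i=1}^N (τ_{iA} − τ̄_A)(τ_{iB} − τ̄_B). -/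
open Finset

noncomputable section

open scoped Classical in
/-- The set Z_A^+ of treatment combinations with g_A(z) = +1. -/
def Zplus (K : ℕ) (A : Finset (Fin K)) : Finset (Combo K) :=
  Finset.univ.filter (fun z => gA K A z = 1)

open scoped Classical in
/-- The set Z_A^− of treatment combinations with g_A(z) = −1. -/
def Zminus (K : ℕ) (A : Finset (Fin K)) : Finset (Combo K) :=
  Finset.univ.filter (fun z => gA K A z = -1)

/-- The finite-population covariance S_{AB}² between unit-level factorial
effects τ_{iA} and τ_{iB}. -/
def SsqAB (K N : ℕ) (Y : Fin N → Combo K → ℝ) (A B : Finset (Fin K)) : ℝ :=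
  (∑ i, (tauUnit K N Y A i - tauBar K N Y A) * (tauUnit K N Y B i - tauBar K N Y B)) /
    ((N : ℝ) - 1)

/-!
By bilinearity, `Cov(τ̂_A, τ̂_B) = 2^{-2(K-1)} ∑_{z,z'} g_A(z) g_B(z') Cov(Ȳ^obs(z), Ȳ^obs(z'))`,
and `Ȳ^obs(z) - Ȳ(z) = r⁻¹ ∑_i W_i(z) (Y_i(z) - Ȳ(z))`, so everything reduces to the first two
moments of the assignment indicators. These follow from symmetry: the uniform law on balanced
assignments is invariant under relabelling the units, so `E[W_i(t)]` and, for `i ≠ j`,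
`E[W_i(t) W_j(t')]` do not depend on the units, and summing over units recovers the group sizes:
`N E[W_i(t)] = r` and `N (N - 1) E[W_i(t) W_j(t')] = r (r - δ_{tt'})`. This gives
`Cov(Ȳ^obs(z), Ȳ^obs(z')) = δ_{zz'} S²(z) / r - S(z, z') / N`; against the contrasts, the first
term splits by the signs of `g_A g_B`, and the second sums to `2^{2(K-1)} S²_{AB} / N`.
-/

open scoped BigOperators

lemma exists_perm_apply_eq_and_apply_eq {α : Type*} {i j i' j' : α} (hij : i ≠ j)
    (hij' : i' ≠ j') : ∃ σ : Equiv.Perm α, σ i = i' ∧ σ j = j' := by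
  have hinj {a b : α} (hab : a ≠ b) : Function.Injective ![a, b] := by
    intro x y hxy
    fin_cases x <;> fin_cases y <;> simp_all [eq_comm]
  obtain ⟨σ, hσ⟩ := Equiv.Perm.exists_extending_pair _ _ (hinj hij) (hinj hij')
  exact ⟨σ, hσ 0, hσ 1⟩

section Balanced

variable {ι T : Type*} [Fintype ι] [DecidableEq ι] [Fintype T] [DecidableEq T] {r : ℕ}

def balancedAssignments (ι T : Type*) [Fintype ι] [DecidableEq ι] [Fintype T] [DecidableEq T]
    (r : ℕ) : Finset (ι → T) :=
  Finset.univ.filter (fun ω => ∀ t : T, (Finset.univ.filter (fun i => ω i = t)).card = r)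

lemma comp_mem_balancedAssignments_iff (σ : Equiv.Perm ι) {ω : ι → T} :
    ω ∘ σ ∈ balancedAssignments ι T r ↔ ω ∈ balancedAssignments ι T r := by
  have (t : T) : #{i | (ω ∘ σ) i = t} = #{i | ω i = t} := Finset.card_equiv σ (by simp)
  simp only [balancedAssignments, mem_filter, mem_univ, true_and, this]

lemma balancedAssignments_nonempty (h : Fintype.card ι = r * Fintype.card T) :
    (balancedAssignments ι T r).Nonempty := by
  let e : ι ≃ T × Fin r := Fintype.equivOfCardEq (by simp [h, mul_comm])
  refine ⟨fun i => (e i).1, mem_filter.2 ⟨mem_univ _, fun t => ?_⟩⟩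
  rw [Finset.card_equiv e (t := {t} ×ˢ univ) fun i => by
      simp only [mem_filter, mem_univ, true_and, mem_product, mem_singleton, and_true],
    card_product, card_singleton, card_univ, Fintype.card_fin, one_mul]

lemma sum_indicator_of_mem_balancedAssignments {ω : ι → T}
    (hω : ω ∈ balancedAssignments ι T r) (t : T) :
    ∑ i, (if ω i = t then 1 else 0 : ℝ) = r := by
  rw [sum_boole, (mem_filter.1 hω).2 t]

lemma expect_balancedAssignments_comp (σ : Equiv.Perm ι) (F : (ι → T) → ℝ) :
    𝔼 ω ∈ balancedAssignments ι T r, F (ω ∘ σ) = 𝔼 ω ∈ balancedAssignments ι T r, F ω :=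
  Finset.expect_nbij' (· ∘ σ) (· ∘ σ.symm)
    (fun _ hω => (comp_mem_balancedAssignments_iff σ).2 hω)
    (fun ω hω => (comp_mem_balancedAssignments_iff σ.symm).2 hω)
    (fun ω _ => by ext; simp) (fun ω _ => by ext; simp) (fun _ _ => rfl)

lemma expect_indicator_balancedAssignments (hne : (balancedAssignments ι T r).Nonempty)
    (i : ι) (t : T) :
    𝔼 ω ∈ balancedAssignments ι T r, (if ω i = t then 1 else 0 : ℝ) = r / Fintype.card ι := by
  have hsymm (j : ι) : 𝔼 ω ∈ balancedAssignments ι T r, (if ω j = t then 1 else 0 : ℝ)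
      = 𝔼 ω ∈ balancedAssignments ι T r, (if ω i = t then 1 else 0 : ℝ) := by
    rw [← expect_balancedAssignments_comp (Equiv.swap i j)]
    simp
  have htotal : ∑ j, 𝔼 ω ∈ balancedAssignments ι T r, (if ω j = t then 1 else 0 : ℝ) = r := by
    rw [← expect_sum_comm, expect_congr rfl fun ω hω =>
      sum_indicator_of_mem_balancedAssignments hω t, expect_const hne]
  simp only [hsymm, sum_const, card_univ, nsmul_eq_mul] at htotal
  rw [eq_div_iff (Nat.cast_ne_zero.2 (Fintype.card_pos_iff.2 ⟨i⟩).ne'), ← htotal, mul_comm]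

lemma sum_indicator_mul_indicator_of_mem_balancedAssignments {ω : ι → T}
    (hω : ω ∈ balancedAssignments ι T r) (t t' : T) :
    ∑ i, ∑ j ∈ univ.erase i, (if ω i = t then 1 else 0 : ℝ) * (if ω j = t' then 1 else 0)
      = r * (r - if t = t' then 1 else 0) := by
  have hdiag (i : ι) : (if ω i = t then 1 else 0 : ℝ) * (if ω i = t' then 1 else 0)
      = (if t = t' then 1 else 0) * (if ω i = t then 1 else 0) := by
    by_cases h : ω i = t <;> by_cases h' : t = t' <;> simp [h, h', eq_comm]
  simp only [← mul_sum, sum_erase_eq_sub (mem_univ _),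
    sum_indicator_of_mem_balancedAssignments hω, mul_sub, sum_sub_distrib, ← sum_mul, hdiag]
  ring

lemma expect_indicator_mul_indicator_balancedAssignments
    (hne : (balancedAssignments ι T r).Nonempty) {i j : ι} (hij : i ≠ j) (t t' : T) :
    𝔼 ω ∈ balancedAssignments ι T r, (if ω i = t then 1 else 0 : ℝ) * (if ω j = t' then 1 else 0)
      = r * (r - if t = t' then 1 else 0) / (Fintype.card ι * (Fintype.card ι - 1)) := by
  have hsymm (k l : ι) (hkl : k ≠ l) :
      𝔼 ω ∈ balancedAssignments ι T r, (if ω k = t then 1 else 0 : ℝ) * (if ω l = t' then 1 else 0)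
        = 𝔼 ω ∈ balancedAssignments ι T r,
            (if ω i = t then 1 else 0 : ℝ) * (if ω j = t' then 1 else 0) := by
    obtain ⟨σ, hσk, hσl⟩ := exists_perm_apply_eq_and_apply_eq hkl hij
    rw [← expect_balancedAssignments_comp σ]
    simp [hσk, hσl]
  have htotal : ∑ k, ∑ l ∈ univ.erase k,
      𝔼 ω ∈ balancedAssignments ι T r, (if ω k = t then 1 else 0 : ℝ) * (if ω l = t' then 1 else 0)
      = r * (r - if t = t' then 1 else 0) := by
    simp only [← expect_sum_comm]
    rw [expect_congr rfl fun ω hω =>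
      sum_indicator_mul_indicator_of_mem_balancedAssignments hω t t', expect_const hne]
  rw [sum_congr rfl fun k _ => sum_congr rfl fun l hl => hsymm k l (ne_of_mem_erase hl).symm]
    at htotal
  have hcard : 1 < Fintype.card ι := Fintype.one_lt_card_iff.2 ⟨i, j, hij⟩
  have hcardR : (1 : ℝ) < Fintype.card ι := by exact_mod_cast hcard
  simp only [sum_const, card_erase_of_mem (mem_univ _), card_univ, nsmul_eq_mul,
    Nat.cast_sub hcard.le, Nat.cast_one] at htotal
  rw [eq_div_iff (by nlinarith), ← htotal]
  ring

lemma expect_sum_indicator_mul_balancedAssignments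
    (hne : (balancedAssignments ι T r).Nonempty) (t : T) (a : ι → ℝ) :
    𝔼 ω ∈ balancedAssignments ι T r, ∑ i, (if ω i = t then 1 else 0) * a i
      = r / Fintype.card ι * ∑ i, a i := by
  simp only [expect_sum_comm, mul_sum, ← expect_mul, expect_indicator_balancedAssignments hne]

lemma expect_sum_indicator_mul_mul_sum_indicator_mul_balancedAssignments
    (hne : (balancedAssignments ι T r).Nonempty) (hι : 1 < Fintype.card ι) (t t' : T)
    {a : ι → ℝ} (ha : ∑ i, a i = 0) (b : ι → ℝ) :
    𝔼 ω ∈ balancedAssignments ι T r,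
        (∑ i, (if ω i = t then 1 else 0) * a i) * (∑ j, (if ω j = t' then 1 else 0) * b j)
      = r * ((if t = t' then 1 else 0) - r / Fintype.card ι) * (∑ i, a i * b i)
          / (Fintype.card ι - 1) := by
  set N : ℝ := (Fintype.card ι : ℝ)
  set δ : ℝ := if t = t' then 1 else 0
  set q : ℝ := r * (r - δ) / (N * (N - 1))
  have hdiag (i : ι) : 𝔼 ω ∈ balancedAssignments ι T r,
      (if ω i = t then 1 else 0 : ℝ) * (if ω i = t' then 1 else 0) = δ * (r / N) := by
    rw [← expect_indicator_balancedAssignments hne i t, mul_expect]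
    refine expect_congr rfl fun ω _ => ?_
    by_cases h : ω i = t <;> by_cases h' : t = t' <;> simp [δ, h, h', eq_comm]
  have hpair (i j : ι) : 𝔼 ω ∈ balancedAssignments ι T r,
      (if ω i = t then 1 else 0) * a i * ((if ω j = t' then 1 else 0) * b j)
      = a i * b j * 𝔼 ω ∈ balancedAssignments ι T r,
          (if ω i = t then 1 else 0 : ℝ) * (if ω j = t' then 1 else 0) := by
    rw [mul_expect]
    exact expect_congr rfl fun _ _ => by ring
  have hexpand : 𝔼 ω ∈ balancedAssignments ι T r,
        (∑ i, (if ω i = t then 1 else 0) * a i) * (∑ j, (if ω j = t' then 1 else 0) * b j)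
      = ∑ i, a i * (b i * (δ * (r / N)) + (∑ j, b j - b i) * q) := by
    simp only [sum_mul_sum]
    rw [expect_sum_comm]
    refine sum_congr rfl fun i _ => ?_
    rw [expect_sum_comm, ← add_sum_erase _ _ (mem_univ i), hpair, hdiag,
      sum_congr rfl fun j hj => by
        rw [hpair,
          expect_indicator_mul_indicator_balancedAssignments hne (ne_of_mem_erase hj).symm],
      ← sum_mul, ← mul_sum, sum_erase_eq_sub (mem_univ i)]
    ring
  have hsplit : ∑ i, a i * (b i * (δ * (r / N)) + (∑ j, b j - b i) * q)
      = (δ * (r / N) - q) * ∑ i, a i * b i + q * (∑ j, b j) * ∑ i, a i := by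
    rw [mul_sum, mul_sum, ← sum_add_distrib]
    exact sum_congr rfl fun i _ => by ring
  have hN1 : N - 1 ≠ 0 := sub_ne_zero.2 (Nat.one_lt_cast.2 hι).ne'
  have hN : N ≠ 0 := by positivity
  rw [hexpand, hsplit, ha, mul_zero, add_zero]
  simp only [q]
  field_simp
  ring

end Balanced

section Design

variable {K N r : ℕ}

lemma assignments_nonempty (hN : N = r * 2 ^ K) : (Assignments K N r).Nonempty :=
  balancedAssignments_nonempty (by simp [hN])

lemma expect_eq_expect_balancedAssignments (f : (Fin N → Combo K) → ℝ) :
    _root_.expect K N r f = 𝔼 ω ∈ balancedAssignments (Fin N) (Combo K) r, f ω :=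
  (expect_eq_sum_div_card _ _).symm

lemma covariance_sum_mul_sum {α β : Type*} (s : Finset α) (t : Finset β) (a : α → ℝ)
    (b : β → ℝ) (f : α → (Fin N → Combo K) → ℝ) (g : β → (Fin N → Combo K) → ℝ) :
    covariance K N r (fun ω => ∑ x ∈ s, a x * f x ω) (fun ω => ∑ y ∈ t, b y * g y ω)
      = ∑ x ∈ s, ∑ y ∈ t, a x * b y * covariance K N r (f x) (g y) := by
  simp only [covariance, expect_eq_expect_balancedAssignments, expect_sum_comm, ← mul_expect,
    ← mul_sub, ← sum_sub_distrib, sum_mul_sum]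
  exact sum_congr rfl fun x _ => sum_congr rfl fun y _ => by
    rw [mul_expect]; exact expect_congr rfl fun _ _ => by ring

lemma YbarObs_eq_sum_indicator_mul (Y : Fin N → Combo K → ℝ) (ω : Fin N → Combo K)
    (z : Combo K) :
    YbarObs K N r Y ω z = (∑ i, (if ω i = z then 1 else 0) * Y i z) / r := by
  simp only [YbarObs, boole_mul]

lemma sum_sub_Ybar (Y : Fin N → Combo K → ℝ) (z : Combo K) :
    ∑ i, (Y i z - Ybar K N Y z) = 0 := by
  rcases eq_or_ne N 0 with rfl | hN
  · simp
  · rw [sum_sub_distrib, sum_const, card_univ, Fintype.card_fin, nsmul_eq_mul, Ybar,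
      mul_div_cancel₀ _ (Nat.cast_ne_zero.2 hN), sub_self]

lemma YbarObs_sub_Ybar (hr : 0 < r) (Y : Fin N → Combo K → ℝ) {ω : Fin N → Combo K}
    (hω : ω ∈ Assignments K N r) (z : Combo K) :
    YbarObs K N r Y ω z - Ybar K N Y z
      = (∑ i, (if ω i = z then 1 else 0) * (Y i z - Ybar K N Y z)) / r := by
  simp only [YbarObs_eq_sum_indicator_mul, mul_sub, sum_sub_distrib, ← sum_mul,
    sum_indicator_of_mem_balancedAssignments hω]
  field_simp

lemma expect_YbarObs (hr : 0 < r) (hN : N = r * 2 ^ K) (Y : Fin N → Combo K → ℝ)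
    (z : Combo K) :
    _root_.expect K N r (fun ω => YbarObs K N r Y ω z) = Ybar K N Y z := by
  simp only [expect_eq_expect_balancedAssignments, YbarObs_eq_sum_indicator_mul, ← expect_div]
  rw [expect_sum_indicator_mul_balancedAssignments (assignments_nonempty hN), Ybar,
    Fintype.card_fin]
  field_simp

lemma tauHat_eq_sum (Y : Fin N → Combo K → ℝ) (A : Finset (Fin K)) :
    tauHat K N r Y A = fun ω => ∑ z, gA K A z / 2 ^ (K - 1) * YbarObs K N r Y ω z := by
  funext ω
  simp only [tauHat, sum_div, div_mul_eq_mul_div]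

lemma Ssq_eq_Scov (Y : Fin N → Combo K → ℝ) (z : Combo K) : Ssq K N Y z = Scov K N Y z z := by
  simp only [Ssq, Scov, sq]

lemma covariance_YbarObs (hK : 1 ≤ K) (hr : 0 < r) (hN : N = r * 2 ^ K)
    (Y : Fin N → Combo K → ℝ) (z z' : Combo K) :
    covariance K N r (fun ω => YbarObs K N r Y ω z) (fun ω => YbarObs K N r Y ω z')
      = (if z = z' then Ssq K N Y z / r else 0) - Scov K N Y z z' / N := by
  have hN1 : 1 < N := by subst hN; nlinarith [Nat.le_self_pow (n := K) (by omega) 2]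
  rw [covariance, expect_YbarObs hr hN, expect_YbarObs hr hN,
    expect_eq_expect_balancedAssignments,
    expect_congr rfl fun ω hω => by
      rw [YbarObs_sub_Ybar hr Y hω, YbarObs_sub_Ybar hr Y hω, div_mul_div_comm],
    ← expect_div,
    expect_sum_indicator_mul_mul_sum_indicator_mul_balancedAssignments (assignments_nonempty hN)
      (by simpa using hN1) z z' (sum_sub_Ybar Y z), Fintype.card_fin]
  have hN0 : (N : ℝ) ≠ 0 := by positivity
  have hN1' : (N : ℝ) - 1 ≠ 0 := sub_ne_zero.2 (Nat.one_lt_cast.2 hN1).ne'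
  have hr0 : (r : ℝ) ≠ 0 := by positivity
  split_ifs with h
  · subst h
    rw [Ssq_eq_Scov, Scov]
    field_simp
  · rw [Scov]
    field_simp
    ring

end Design

section Contrasts

variable {K N : ℕ}

lemma gA_eq_one_or_eq_neg_one (A : Finset (Fin K)) (z : Combo K) :
    gA K A z = 1 ∨ gA K A z = -1 :=
  prod_induction _ (fun x : ℝ => x = 1 ∨ x = -1)
    (by rintro _ _ (rfl | rfl) (rfl | rfl) <;> norm_num) (Or.inl rfl)
    (fun k _ => by by_cases h : z k <;> simp [h])

lemma sum_gA_mul (A : Finset (Fin K)) (s : Finset (Combo K)) (F : Combo K → ℝ) :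
    ∑ z ∈ s, gA K A z * F z = ∑ z ∈ s ∩ Zplus K A, F z - ∑ z ∈ s ∩ Zminus K A, F z := by
  classical
  have hplus : s.filter (fun z => gA K A z = 1) = s ∩ Zplus K A := by
    ext z
    simp [Zplus]
  have hminus : s.filter (fun z => ¬ gA K A z = 1) = s ∩ Zminus K A := by
    ext z
    simp only [Zminus, mem_inter, mem_filter, mem_univ, true_and]
    exact and_congr_right fun _ =>
      ⟨(gA_eq_one_or_eq_neg_one A z).resolve_left, fun h => by norm_num [h]⟩
  rw [← sum_filter_add_sum_filter_not s fun z => gA K A z = 1, hplus, hminus, sub_eq_add_neg,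
    ← sum_neg_distrib]
  congr 1 <;> refine sum_congr rfl fun z hz => ?_
  · rw [(mem_filter.1 (mem_inter.1 hz).2).2, one_mul]
  · rw [(mem_filter.1 (mem_inter.1 hz).2).2, neg_one_mul]

lemma sum_gA_mul_gA_mul (A B : Finset (Fin K)) (F : Combo K → ℝ) :
    ∑ z, gA K A z * gA K B z * F z
      = (∑ z ∈ Zminus K A ∩ Zminus K B, F z) - (∑ z ∈ Zminus K A ∩ Zplus K B, F z)
        - (∑ z ∈ Zplus K A ∩ Zminus K B, F z) + (∑ z ∈ Zplus K A ∩ Zplus K B, F z) := by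
  simp only [mul_assoc, sum_gA_mul A, univ_inter, sum_gA_mul B]
  ring

lemma tauBar_eq_sum (Y : Fin N → Combo K → ℝ) (A : Finset (Fin K)) :
    tauBar K N Y A = (∑ z, gA K A z * Ybar K N Y z) / 2 ^ (K - 1) := by
  simp only [tauBar, tauUnit, Ybar, ← sum_div, mul_div_assoc', mul_sum]
  rw [sum_comm, div_right_comm]

lemma sum_gA_mul_sub_Ybar (Y : Fin N → Combo K → ℝ) (A : Finset (Fin K)) (i : Fin N) :
    ∑ z, gA K A z * (Y i z - Ybar K N Y z)
      = 2 ^ (K - 1) * (tauUnit K N Y A i - tauBar K N Y A) := by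
  rw [tauBar_eq_sum, tauUnit, ← sub_div, mul_div_cancel₀ _ (by positivity), ← sum_sub_distrib]
  simp only [mul_sub]

lemma sum_sum_gA_mul_gA_mul_Scov (Y : Fin N → Combo K → ℝ) (A B : Finset (Fin K)) :
    ∑ z, ∑ z', gA K A z * gA K B z' * Scov K N Y z z'
      = 2 ^ (K - 1) * 2 ^ (K - 1) * SsqAB K N Y A B := by
  calc ∑ z, ∑ z', gA K A z * gA K B z' * Scov K N Y z z'
      = (∑ i, (∑ z, gA K A z * (Y i z - Ybar K N Y z))
          * (∑ z', gA K B z' * (Y i z' - Ybar K N Y z'))) / ((N : ℝ) - 1) := by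
        simp only [Scov, mul_div_assoc', ← sum_div, mul_sum, sum_mul]
        rw [sum_congr rfl fun z _ => sum_comm, sum_comm]
        refine congrArg (· / _) (sum_congr rfl fun i _ => ?_)
        rw [sum_comm]
        exact sum_congr rfl fun z' _ => sum_congr rfl fun z _ => by ring
    _ = 2 ^ (K - 1) * 2 ^ (K - 1) * SsqAB K N Y A B := by
        simp only [sum_gA_mul_sub_Ybar, SsqAB, mul_div_assoc', mul_sum]
        exact congrArg (· / _) (sum_congr rfl fun i _ => by ring)

end Contrasts

theorem tauHat_covariance_general (K N r : ℕ) (hK : 1 ≤ K) (hr : 0 < r) (hN : N = r * 2 ^ K)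
    (Y : Fin N → Combo K → ℝ) (A B : Finset (Fin K)) :
    covariance K N r (tauHat K N r Y A) (tauHat K N r Y B) =
      (1 / ((2 : ℝ) ^ (2 * (K - 1)) * (r : ℝ))) *
        ((∑ z ∈ Zminus K A ∩ Zminus K B, Ssq K N Y z) -
          (∑ z ∈ Zminus K A ∩ Zplus K B, Ssq K N Y z) -
          (∑ z ∈ Zplus K A ∩ Zminus K B, Ssq K N Y z) +
          (∑ z ∈ Zplus K A ∩ Zplus K B, Ssq K N Y z)) -
      (1 / (N : ℝ)) * SsqAB K N Y A B := by
  have hdiag : ∑ z, ∑ z', gA K A z / 2 ^ (K - 1) * (gA K B z' / 2 ^ (K - 1))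
      * (if z = z' then Ssq K N Y z / r else 0)
      = (∑ z, gA K A z * gA K B z * Ssq K N Y z) / (2 ^ (2 * (K - 1)) * r) := by
    simp only [mul_ite, mul_zero, sum_ite_eq, mem_univ, if_true, sum_div]
    exact sum_congr rfl fun z _ => by ring
  have hoff : ∑ z, ∑ z', gA K A z / 2 ^ (K - 1) * (gA K B z' / 2 ^ (K - 1))
      * (Scov K N Y z z' / N)
      = (∑ z, ∑ z', gA K A z * gA K B z' * Scov K N Y z z') / (2 ^ (2 * (K - 1)) * N) := by
    simp only [sum_div]
    exact sum_congr rfl fun z _ => sum_congr rfl fun z' _ => by ring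
  rw [tauHat_eq_sum, tauHat_eq_sum, covariance_sum_mul_sum (f := fun z ω => YbarObs K N r Y ω z)
    (g := fun z ω => YbarObs K N r Y ω z)]
  simp only [covariance_YbarObs hK hr hN, mul_sub, sum_sub_distrib, hdiag, hoff,
    sum_gA_mul_gA_mul, sum_sum_gA_mul_gA_mul_Scov]
  rw [← pow_add, ← two_mul, mul_div_mul_left _ _ (by positivity)]
  ring

/-- Theorem 3. The sampling covariance between two estimated
factorial effects. -/
theorem tauHat_covariance (K N r : ℕ) (hK : 1 ≤ K) (hr : 0 < r) (hN : N = r * 2 ^ K)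
    (Y : Fin N → Combo K → ℝ) (A B : Finset (Fin K))
    (hA : A.Nonempty) (hB : B.Nonempty) (hAB : A ≠ B) :
    covariance K N r (tauHat K N r Y A) (tauHat K N r Y B) =
      (1 / ((2 : ℝ) ^ (2 * (K - 1)) * (r : ℝ))) *
        ((∑ z ∈ Zminus K A ∩ Zminus K B, Ssq K N Y z) -
          (∑ z ∈ Zminus K A ∩ Zplus K B, Ssq K N Y z) -
          (∑ z ∈ Zplus K A ∩ Zminus K B, Ssq K N Y z) +
          (∑ z ∈ Zplus K A ∩ Zplus K B, Ssq K N Y z)) -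
      (1 / (N : ℝ)) * SsqAB K N Y A B :=
  tauHat_covariance_general K N r hK hr hN Y A B
end
end

section
/- Under strict additivity, for any two distinct nonempty subsets A ≠ B of {1,…,K}, the estimated factorial effects are uncorrelated under a completely randomized assignment: Cov(τ̂_A, τ̂_B) = 0. -/
open Finset

noncomputable section

/-! Under strict additivity, translating every unit's treatment combination by a fixed `t`
(coordinatewise product in the ±1 coding) maps completely randomized assignments bijectively
onto themselves, and changes each `τ̂_A` into `g_A(t) τ̂_A` plus a constant. Hence
`Cov(τ̂_A, τ̂_B) = g_A(t) g_B(t) Cov(τ̂_A, τ̂_B)`, and for `A ≠ B` some `t` (flipping one factor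
of `A ∆ B`) makes `g_A(t) g_B(t) = -1`. -/

section Randomization

variable {K N r : ℕ}

lemma comp_mem_Assignments_iff (σ : Equiv.Perm (Combo K)) (ω : Fin N → Combo K) :
    ⇑σ ∘ ω ∈ Assignments K N r ↔ ω ∈ Assignments K N r := by
  simp only [Assignments, mem_filter, mem_univ, true_and, Function.comp_apply,
    ← Equiv.eq_symm_apply]
  exact ⟨fun h z => by simpa using h (σ z), fun h _ => h _⟩

lemma expect_comp_perm (σ : Equiv.Perm (Combo K)) (f : (Fin N → Combo K) → ℝ) :
    _root_.expect K N r (fun ω => f (⇑σ ∘ ω)) = _root_.expect K N r f := by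
  unfold _root_.expect
  congr 1
  exact sum_equiv (Equiv.piCongrRight fun _ => σ) (fun ω => (comp_mem_Assignments_iff σ ω).symm)
    fun _ _ => rfl

lemma covariance_comp_perm (σ : Equiv.Perm (Combo K)) (f g : (Fin N → Combo K) → ℝ) :
    covariance K N r (fun ω => f (⇑σ ∘ ω)) (fun ω => g (⇑σ ∘ ω)) = covariance K N r f g := by
  simp only [covariance, expect_comp_perm σ f, expect_comp_perm σ g]
  exact expect_comp_perm σ fun ω => (f ω - _root_.expect K N r f) * (g ω - _root_.expect K N r g)

lemma expect_congr {f g : (Fin N → Combo K) → ℝ} (h : ∀ ω ∈ Assignments K N r, f ω = g ω) :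
    _root_.expect K N r f = _root_.expect K N r g := by
  unfold _root_.expect
  rw [sum_congr rfl h]

lemma expect_affine (hne : (Assignments K N r).Nonempty) (f : (Fin N → Combo K) → ℝ)
    (a b : ℝ) :
    _root_.expect K N r (fun ω => a * f ω + b) = a * _root_.expect K N r f + b := by
  have hcard : ((Assignments K N r).card : ℝ) ≠ 0 := by exact_mod_cast hne.card_pos.ne'
  unfold _root_.expect
  rw [sum_add_distrib, ← mul_sum, sum_const, nsmul_eq_mul]
  field_simp

lemma covariance_congr_affine {f g f' g' : (Fin N → Combo K) → ℝ} {a b c d : ℝ}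
    (hf : ∀ ω ∈ Assignments K N r, f' ω = a * f ω + b)
    (hg : ∀ ω ∈ Assignments K N r, g' ω = c * g ω + d) :
    covariance K N r f' g' = a * c * covariance K N r f g := by
  rcases (Assignments K N r).eq_empty_or_nonempty with hemp | hne
  · simp [covariance, _root_.expect, hemp]
  have hEf : _root_.expect K N r f' = a * _root_.expect K N r f + b := by
    rw [expect_congr hf, expect_affine hne]
  have hEg : _root_.expect K N r g' = c * _root_.expect K N r g + d := by
    rw [expect_congr hg, expect_affine hne]
  calc covariance K N r f' g'
      = _root_.expect K N r (fun ω => a * c *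
          ((f ω - _root_.expect K N r f) * (g ω - _root_.expect K N r g)) + 0) := by
        rw [covariance, hEf, hEg]
        exact expect_congr fun ω hω => by rw [hf ω hω, hg ω hω]; ring
    _ = a * c * covariance K N r f g := by rw [expect_affine hne, add_zero, covariance]

end Randomization

section Contrasts

variable {K : ℕ}

/-- Pointwise multiplication by `t` in the ±1 coding (`true` = +1). -/
def comboMul (t : Combo K) : Equiv.Perm (Combo K) :=
  Function.Involutive.toPerm (fun z k => z k == t k) fun z => by
    funext k
    show ((z k == t k) == t k) = z k
    cases z k <;> cases t k <;> rfl

lemma comboMul_symm (t : Combo K) : (comboMul t).symm = comboMul t :=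
  Function.Involutive.toPerm_symm _

lemma comboMul_comboMul (t z : Combo K) : comboMul t (comboMul t z) = z := by
  nth_rw 1 [← comboMul_symm t]
  exact Equiv.symm_apply_apply _ z

lemma gA_comboMul (A : Finset (Fin K)) (t z : Combo K) :
    gA K A (comboMul t z) = gA K A t * gA K A z := by
  rw [gA, gA, gA, ← prod_mul_distrib]
  refine prod_congr rfl fun k _ => ?_
  change (if (z k == t k) then (1 : ℝ) else -1) = _
  cases z k <;> cases t k <;> norm_num

lemma exists_gA_mul_gA_eq_neg_one {A B : Finset (Fin K)} (hAB : A ≠ B) :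
    ∃ t : Combo K, gA K A t * gA K B t = -1 := by
  obtain ⟨k₀, hk₀⟩ := symmDiff_nonempty.mpr hAB
  have hgA (S : Finset (Fin K)) :
      gA K S (fun k => decide (k ≠ k₀)) = if k₀ ∈ S then -1 else 1 := by
    simp [gA, ite_not, prod_ite_eq']
  refine ⟨fun k => decide (k ≠ k₀), ?_⟩
  rcases mem_symmDiff.mp hk₀ with ⟨hA, hB⟩ | ⟨hB, hA⟩ <;> rw [hgA, hgA] <;> simp [hA, hB]

end Contrasts

section Additivity

variable {K N r : ℕ} {Y : Fin N → Combo K → ℝ}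

lemma StrictAdditivity.sub_eq_Ybar_sub (hadd : StrictAdditivity K N Y) (i : Fin N)
    (z z' : Combo K) : Y i z - Y i z' = Ybar K N Y z - Ybar K N Y z' := by
  have hN : (N : ℝ) ≠ 0 := by exact_mod_cast i.pos.ne'
  calc Y i z - Y i z' = (∑ _j : Fin N, (Y i z - Y i z')) / N := by
        rw [sum_const, card_univ, Fintype.card_fin, nsmul_eq_mul]
        field_simp
    _ = (∑ j, (Y j z - Y j z')) / N := by
        rw [sum_congr rfl fun j _ => hadd z z' i j]
    _ = Ybar K N Y z - Ybar K N Y z' := by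
        rw [Ybar, Ybar, ← sub_div, sum_sub_distrib]

-- `r * _ / r` rather than `_`: for `r = 0` the division in `YbarObs` gives `0`.
lemma StrictAdditivity.YbarObs_comp_perm (hadd : StrictAdditivity K N Y)
    (σ : Equiv.Perm (Combo K)) {ω : Fin N → Combo K} (hω : ω ∈ Assignments K N r)
    (z : Combo K) :
    YbarObs K N r Y (⇑σ ∘ ω) z = YbarObs K N r Y ω (σ.symm z)
      + r * (Ybar K N Y z - Ybar K N Y (σ.symm z)) / r := by
  have hcard : #{i | ω i = σ.symm z} = r := by
    simp only [Assignments, mem_filter, mem_univ, true_and] at hω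
    exact hω _
  simp only [YbarObs, Function.comp_apply, ← Equiv.eq_symm_apply, ← sum_filter, ← add_div]
  congr 1
  calc ∑ i with ω i = σ.symm z, Y i z
      = ∑ i with ω i = σ.symm z, (Y i (σ.symm z) + (Ybar K N Y z - Ybar K N Y (σ.symm z))) :=
        sum_congr rfl fun i _ => by linarith [hadd.sub_eq_Ybar_sub i z (σ.symm z)]
    _ = _ := by rw [sum_add_distrib, sum_const, hcard, nsmul_eq_mul]

lemma StrictAdditivity.tauHat_comp_comboMul (hadd : StrictAdditivity K N Y) (t : Combo K)
    (A : Finset (Fin K)) :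
    ∃ c : ℝ, ∀ ω ∈ Assignments K N r,
      tauHat K N r Y A (comboMul t ∘ ω) = gA K A t * tauHat K N r Y A ω + c := by
  refine ⟨(∑ z, gA K A z * (r * (Ybar K N Y z - Ybar K N Y (comboMul t z)) / r)) / 2 ^ (K - 1),
    fun ω hω => ?_⟩
  have hreindex : ∑ z, gA K A z * YbarObs K N r Y ω (comboMul t z)
      = gA K A t * ∑ z, gA K A z * YbarObs K N r Y ω z := by
    rw [← Equiv.sum_comp (comboMul t), mul_sum]
    refine sum_congr rfl fun z _ => ?_
    rw [gA_comboMul, comboMul_comboMul]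
    ring
  simp only [tauHat, hadd.YbarObs_comp_perm _ hω, comboMul_symm, mul_add, sum_add_distrib,
    hreindex, add_div, mul_div_assoc]

end Additivity

theorem tauHat_uncorrelated_additive_general (K N r : ℕ)
    (Y : Fin N → Combo K → ℝ)
    (hadd : StrictAdditivity K N Y)
    (A B : Finset (Fin K)) (hAB : A ≠ B) :
    covariance K N r (tauHat K N r Y A) (tauHat K N r Y B) = 0 := by
  obtain ⟨t, ht⟩ := exists_gA_mul_gA_eq_neg_one hAB
  obtain ⟨a, ha⟩ := hadd.tauHat_comp_comboMul t A
  obtain ⟨b, hb⟩ := hadd.tauHat_comp_comboMul t B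
  have hflip : covariance K N r (tauHat K N r Y A) (tauHat K N r Y B)
      = gA K A t * gA K B t * covariance K N r (tauHat K N r Y A) (tauHat K N r Y B) :=
    (covariance_comp_perm (comboMul t) _ _).symm.trans (covariance_congr_affine ha hb)
  rw [ht] at hflip
  linarith

/-- Corollary 4. Under strict additivity, distinct estimated
factorial effects are uncorrelated. -/
theorem tauHat_uncorrelated_additive (K N r : ℕ) (hK : 1 ≤ K) (hr : 0 < r)
    (hN : N = r * 2 ^ K) (Y : Fin N → Combo K → ℝ)
    (hadd : StrictAdditivity K N Y)
    (A B : Finset (Fin K)) (hA : A.Nonempty) (hB : B.Nonempty) (hAB : A ≠ B) :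
    covariance K N r (tauHat K N r Y A) (tauHat K N r Y B) = 0 :=
  tauHat_uncorrelated_additive_general K N r Y hadd A B hAB
end
end
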